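/- arXiv:1910.08378 — 2 statements merged into one kernel-verified Lean document; each statement's English description precedes it below -/
import Mathlib

section
/- Let μ be a Borel probability measure on [0,1], and suppose there exists c₀ > 0 such that ‖v‖²_μ ≤ c₀·E(v) for all v ∈ H¹₀. Then there exists a constant c₁ > 0 such that for all u ∈ H¹([0,1]) (absolutely continuous with L² derivative), ‖u‖²_μ ≤ c₁·(E(u) + ‖u‖₁²), where E(u) = ∫₀¹ (u')² dx and ‖u‖₁ = ∫₀¹ |u| dμ. -/
open MeasureTheory

/-- Absolutely continuous functions on `[0,1]` with square-integrable derivative. -/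
def MemH1 (u : ℝ → ℝ) : Prop :=
  ∃ g : ℝ → ℝ, Integrable (fun x => (g x) ^ 2) (volume.restrict (Set.Icc (0:ℝ) 1)) ∧
    ∀ x ∈ Set.Icc (0:ℝ) 1, u x = u 0 + ∫ y in (0:ℝ)..x, g y

/-- The Dirichlet energy `E(u) = ∫₀¹ (u')² dx`. -/
noncomputable def dirEnergy (u : ℝ → ℝ) : ℝ := ∫ x in (0:ℝ)..1, (deriv u x) ^ 2

open Metric Filter

lemma core_ftc {G : ℝ → ℝ} (hG : Integrable G (volume : Measure ℝ)) :
    ∀ᵐ t : ℝ, HasDerivAt (fun y => ∫ z in (0:ℝ)..y, G z) (G t) t := by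
  filter_upwards [IsUnifLocDoublingMeasure.ae_tendsto_average_norm_sub
    (volume : Measure ℝ) hG.locallyIntegrable 1] with t ht
  rw [hasDerivAt_iff_tendsto_slope]
  have hδ : Tendsto (fun y : ℝ => dist y t) (nhdsWithin t {t}ᶜ) (nhdsWithin 0 (Set.Ioi 0)) := by
    rw [tendsto_nhdsWithin_iff]
    constructor
    · apply tendsto_nhdsWithin_of_tendsto_nhds
      have := ((continuous_id.dist (continuous_const : Continuous fun _ : ℝ => t))).tendsto t
      simpa using this
    · filter_upwards [self_mem_nhdsWithin] with y hy
      exact dist_pos.2 hy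
  have hmem : ∀ᶠ y : ℝ in nhdsWithin t {t}ᶜ, t ∈ closedBall ((fun _ => t) y) (1 * dist y t) := by
    filter_upwards [self_mem_nhdsWithin] with y hy
    simp only [mem_closedBall, dist_self, one_mul]
    positivity
  have havg := ht (fun _ => t) (fun y => dist y t) hδ hmem
  have key : ∀ y : ℝ, y ≠ t →
      ‖slope (fun y => ∫ z in (0:ℝ)..y, G z) t y - G t‖ ≤
        2 * ⨍ z in closedBall t (dist y t), ‖G z - G t‖ := by
    intro y hy
    set d := dist y t with hd
    have hd0 : 0 < d := dist_pos.2 hy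
    have hIb : IntegrableOn (fun z => ‖G z - G t‖) (closedBall t d) volume :=
      (hG.integrableOn.sub (integrableOn_const measure_closedBall_lt_top.ne)).norm
    have hsub : Set.uIoc t y ⊆ closedBall t d := by
      intro z hz
      rw [Real.closedBall_eq_Icc]
      have h := Set.uIoc_subset_uIcc hz
      rw [Set.uIcc_eq_union] at h
      rw [Real.dist_eq] at hd
      rcases h with h | h <;> rw [Set.mem_Icc] at h <;>
        constructor <;> cases abs_cases (y - t) <;> linarith
    have hyt : y - t ≠ 0 := sub_ne_zero.2 hy
    have hInt : IntervalIntegrable G volume t y := hG.intervalIntegrable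
    have hconst : IntervalIntegrable (fun _ : ℝ => G t) volume t y := intervalIntegrable_const
    have h2 : (∫ z in (0:ℝ)..y, G z) - ∫ z in (0:ℝ)..t, G z = ∫ z in t..y, G z :=
      intervalIntegral.integral_interval_sub_left hG.intervalIntegrable hG.intervalIntegrable
    have h1 : slope (fun y => ∫ z in (0:ℝ)..y, G z) t y - G t
        = (∫ z in t..y, (G z - G t)) / (y - t) := by
      rw [slope_def_field, intervalIntegral.integral_sub hInt hconst,
        intervalIntegral.integral_const, smul_eq_mul, ← h2]
      field_simp
    rw [h1, norm_div, Real.norm_eq_abs (y - t)]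
    have habs : |y - t| = d := by rw [hd, Real.dist_eq]
    rw [habs]
    have h3 : ‖(∫ z in t..y, (G z - G t))‖ ≤ ∫ z in Set.uIoc t y, ‖G z - G t‖ :=
      intervalIntegral.norm_integral_le_integral_norm_uIoc
    have h4 : ∫ z in Set.uIoc t y, ‖G z - G t‖ ≤ ∫ z in closedBall t d, ‖G z - G t‖ :=
      setIntegral_mono_set hIb (by filter_upwards with z using norm_nonneg _)
        (HasSubset.Subset.eventuallyLE hsub)
    have h5 : ∫ z in closedBall t d, ‖G z - G t‖
        = (2 * d) * ⨍ z in closedBall t d, ‖G z - G t‖ := by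
      rw [setAverage_eq, smul_eq_mul, measureReal_def, Real.volume_closedBall, ENNReal.toReal_ofReal (by positivity),
        ← mul_assoc, mul_inv_cancel₀ (by positivity), one_mul]
    rw [div_le_iff₀ hd0]
    calc ‖(∫ z in t..y, (G z - G t))‖ ≤ ∫ z in closedBall t d, ‖G z - G t‖ := h3.trans h4
      _ = (2 * ⨍ z in closedBall t d, ‖G z - G t‖) * d := by rw [h5]; ring
  have hzero : Tendsto (fun y => slope (fun y => ∫ z in (0:ℝ)..y, G z) t y - G t)
      (nhdsWithin t {t}ᶜ) (nhds 0) := by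
    apply squeeze_zero_norm' _ (by simpa using havg.const_mul 2)
    filter_upwards [self_mem_nhdsWithin] with y hy
    exact key y hy
  have := hzero.add_const (G t)
  simpa using this

open Set

lemma cs_aux {g : ℝ → ℝ} {x : ℝ} (hx0 : 0 < x) (hx1 : x ≤ 1)
    (hgi : IntegrableOn g (Set.Ioc 0 x) volume)
    (hg2 : IntegrableOn (fun z => (g z)^2) (Set.Ioc 0 x) volume) :
    (∫ z in Set.Ioc (0:ℝ) x, g z)^2 ≤ ∫ z in Set.Ioc (0:ℝ) x, (g z)^2 := by
  set ν := volume.restrict (Set.Ioc (0:ℝ) x) with hν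
  haveI : IsFiniteMeasure ν := ⟨by
    rw [hν, Measure.restrict_apply_univ]; exact measure_Ioc_lt_top⟩
  set m := ∫ z, g z ∂ν with hm
  have hμ : (ν Set.univ).toReal = x := by
    rw [hν, Measure.restrict_apply_univ, Real.volume_Ioc, sub_zero, ENNReal.toReal_ofReal hx0.le]
  have hnn : 0 ≤ ∫ z, (x * g z - m)^2 ∂ν := integral_nonneg fun z => sq_nonneg _
  have hI0 : 0 ≤ ∫ z, (g z)^2 ∂ν := integral_nonneg fun z => sq_nonneg _
  have hexp : ∫ z, (x * g z - m)^2 ∂ν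
      = x^2 * (∫ z, (g z)^2 ∂ν) - 2*x*m*m + m^2 * x := by
    have e1 : ∀ z, (x * g z - m)^2 = x^2 * (g z)^2 - (2*x*m) * g z + m^2 := by intro z; ring
    simp_rw [e1]
    have i2 : Integrable (fun z => x^2 * g z^2) ν := hg2.const_mul (x^2)
    have i3 : Integrable (fun z => 2*x*m * g z) ν := hgi.const_mul (2*x*m)
    have i1 : Integrable (fun z => x^2 * g z^2 - 2*x*m * g z) ν := i2.sub i3
    rw [integral_add i1 (integrable_const _), integral_sub i2 i3,
      integral_const_mul, integral_const_mul, integral_const, smul_eq_mul, measureReal_def, hμ, ← hm]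
    ring
  rw [hexp] at hnn
  have h2 : 0 ≤ x * (∫ z, (g z)^2 ∂ν) - m^2 := by
    have := (mul_nonneg_iff_of_pos_left hx0).mp (by nlinarith [hnn] : 0 ≤ x * (x * (∫ z, (g z)^2 ∂ν) - m^2))
    exact this
  nlinarith [mul_nonneg (sub_nonneg.2 hx1) hI0]

lemma claimC {u g : ℝ → ℝ}
    (hg2 : Integrable (fun x => (g x)^2) (volume.restrict (Set.Icc (0:ℝ) 1)))
    (hu : ∀ x ∈ Set.Icc (0:ℝ) 1, u x = u 0 + ∫ y in (0:ℝ)..x, g y) :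
    ∀ x ∈ Set.Icc (0:ℝ) 1, (u x - u 0)^2 ≤ ∫ t in (0:ℝ)..1, (deriv u t) ^ 2 := by
  set A := {x : ℝ | x ∈ Set.Icc (0:ℝ) 1 ∧ IntervalIntegrable g volume 0 x} with hA
  have hA0 : (0:ℝ) ∈ A := ⟨by simp, by simp [intervalIntegrable_iff]⟩
  have hAbdd : BddAbove A := ⟨1, fun x hx => hx.1.2⟩
  set s := sSup A with hsdef
  have hs0 : 0 ≤ s := le_csSup hAbdd hA0
  have hs1 : s ≤ 1 := csSup_le ⟨0, hA0⟩ (fun x hx => hx.1.2)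
  have hlt : ∀ x : ℝ, 0 ≤ x → x < s → IntervalIntegrable g volume 0 x := by
    intro x hx0 hxs
    obtain ⟨y, hyA, hxy⟩ := exists_lt_of_lt_csSup ⟨0, hA0⟩ hxs
    refine hyA.2.mono_set ?_
    rw [Set.uIcc_of_le hx0, Set.uIcc_of_le hyA.1.1]
    exact Set.Icc_subset_Icc le_rfl hxy.le
  have hgt : ∀ x ∈ Set.Icc (0:ℝ) 1, s < x → u x = u 0 := by
    intro x hx hsx
    have hni : ¬ IntervalIntegrable g volume 0 x :=
      fun hI => absurd (le_csSup hAbdd ⟨hx, hI⟩) (not_le.2 hsx)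
    rw [hu x hx, intervalIntegral.integral_undef hni, add_zero]
  -- local FTC below any integrable cutoff
  have hDb : ∀ b : ℝ, 0 ≤ b → b ≤ 1 → IntervalIntegrable g volume 0 b →
      ∀ᵐ t : ℝ, t ∈ Set.Ioo 0 b → HasDerivAt u (g t) t := by
    intro b hb0 hb1 hbI
    set G : ℝ → ℝ := (Set.Ioc 0 b).indicator g with hGdef
    have hGint : Integrable G volume :=
      IntegrableOn.integrable_indicator hbI.1 measurableSet_Ioc
    filter_upwards [core_ftc hGint] with t htF htIoo
    have hev : u =ᶠ[nhds t] fun y => u 0 + ∫ z in (0:ℝ)..y, G z := by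
      filter_upwards [isOpen_Ioo.mem_nhds htIoo] with y hy
      have hy' : y ∈ Set.Icc (0:ℝ) 1 := ⟨hy.1.le, hy.2.le.trans hb1⟩
      rw [hu y hy']
      congr 1
      rw [intervalIntegral.integral_of_le hy.1.le, intervalIntegral.integral_of_le hy.1.le]
      refine setIntegral_congr_fun measurableSet_Ioc (fun z hz => ?_)
      rw [hGdef]
      exact (Set.indicator_of_mem (show z ∈ Set.Ioc (0:ℝ) b from ⟨hz.1, hz.2.trans hy.2.le⟩) g).symm
    have hder : HasDerivAt (fun y => u 0 + ∫ z in (0:ℝ)..y, G z) (G t) t := htF.const_add (u 0)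
    have h2 : G t = g t := Set.indicator_of_mem (show t ∈ Set.Ioc (0:ℝ) b from ⟨htIoo.1, htIoo.2.le⟩) g
    exact h2 ▸ (hder.congr_of_eventuallyEq hev)
  have hD : ∀ᵐ t : ℝ, t ∈ Set.Ioo 0 s → HasDerivAt u (g t) t := by
    have hq : ∀ᵐ t : ℝ, ∀ q : ℚ, 0 ≤ (q:ℝ) → (q:ℝ) < s → t ∈ Set.Ioo 0 (q:ℝ) →
        HasDerivAt u (g t) t := by
      rw [ae_all_iff]
      intro q
      by_cases hq1 : 0 ≤ (q:ℝ) ∧ (q:ℝ) < s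
      · filter_upwards [hDb q hq1.1 (hq1.2.le.trans hs1) (hlt q hq1.1 hq1.2)] with t ht _ _ htq
        exact ht htq
      · filter_upwards with t h1 h2
        exact absurd ⟨h1, h2⟩ hq1
    filter_upwards [hq] with t ht hts
    obtain ⟨q, hq1, hq2⟩ := exists_rat_btwn hts.2
    exact ht q (hts.1.trans hq1).le hq2 ⟨hts.1, hq1⟩
  have hne : ∀ᵐ t : ℝ, t ≠ s := by
    simp [ae_iff, not_not, Set.setOf_eq_eq_singleton, measure_singleton]
  have hae : (fun t => deriv u t) =ᶠ[ae (volume.restrict (Set.Ioo (0:ℝ) 1))]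
      (Set.Ioo (0:ℝ) s).indicator g := by
    filter_upwards [ae_restrict_mem measurableSet_Ioo, ae_restrict_of_ae hD,
      ae_restrict_of_ae hne] with t ht hDt hnet
    rcases lt_or_gt_of_ne hnet with h | h
    · have htIoo : t ∈ Set.Ioo 0 s := ⟨ht.1, h⟩
      rw [Set.indicator_of_mem htIoo, (hDt htIoo).deriv]
    · rw [Set.indicator_of_notMem (fun hc => absurd hc.2 (not_lt.2 h.le))]
      have hev : u =ᶠ[nhds t] fun _ => u 0 := by
        filter_upwards [isOpen_Ioo.mem_nhds (⟨h, ht.2⟩ : t ∈ Set.Ioo s 1)] with y hy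
        exact hgt y ⟨hs0.trans hy.1.le, hy.2.le⟩ hy.1
      rw [hev.deriv_eq, deriv_const]
  have hEeq : (∫ t in (0:ℝ)..1, (deriv u t) ^ 2) = ∫ t in Set.Ioo (0:ℝ) s, (g t)^2 := by
    rw [intervalIntegral.integral_of_le zero_le_one, integral_Ioc_eq_integral_Ioo]
    have hae2 : (fun t => (deriv u t)^2) =ᶠ[ae (volume.restrict (Set.Ioo (0:ℝ) 1))]
        (fun t => ((Set.Ioo (0:ℝ) s).indicator g t)^2) :=
      hae.mono (fun t ht => by simp only at ht ⊢; rw [ht])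
    rw [integral_congr_ae hae2]
    have hind : ∀ t, ((Set.Ioo (0:ℝ) s).indicator g t)^2
        = (Set.Ioo (0:ℝ) s).indicator (fun z => (g z)^2) t := by
      intro t
      by_cases h : t ∈ Set.Ioo (0:ℝ) s <;> simp [h]
    simp_rw [hind]
    rw [setIntegral_indicator measurableSet_Ioo,
      Set.inter_eq_self_of_subset_right (Set.Ioo_subset_Ioo le_rfl hs1)]
  have hg2' : IntegrableOn (fun z => (g z)^2) (Set.Icc 0 1) volume := hg2
  have hg2s : IntegrableOn (fun z => (g z)^2) (Set.Ioc 0 s) volume :=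
    hg2'.mono_set (fun z hz => ⟨hz.1.le, hz.2.trans hs1⟩)
  intro x hx
  by_cases hxA : IntervalIntegrable g volume 0 x
  · rcases eq_or_lt_of_le hx.1 with h0 | h0
    · have hnn0 : (0:ℝ) ≤ ∫ t in Set.Ioo (0:ℝ) s, (g t)^2 := integral_nonneg fun z => sq_nonneg _
      rw [← h0, sub_self, hEeq]
      simpa using hnn0
    · have hxs : x ≤ s := le_csSup hAbdd ⟨hx, hxA⟩
      have hu' : u x - u 0 = ∫ z in Set.Ioc (0:ℝ) x, g z := by
        rw [hu x hx, intervalIntegral.integral_of_le hx.1]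
        ring
      rw [hu', hEeq, ← integral_Ioc_eq_integral_Ioo]
      calc (∫ z in Set.Ioc (0:ℝ) x, g z)^2
          ≤ ∫ z in Set.Ioc (0:ℝ) x, (g z)^2 :=
            cs_aux h0 hx.2 hxA.1 (hg2s.mono_set (Set.Ioc_subset_Ioc le_rfl hxs))
        _ ≤ ∫ z in Set.Ioc (0:ℝ) s, (g z)^2 :=
            setIntegral_mono_set hg2s (by filter_upwards with z using sq_nonneg _)
              (HasSubset.Subset.eventuallyLE (Set.Ioc_subset_Ioc le_rfl hxs))
  · have hnn0 : (0:ℝ) ≤ ∫ t in Set.Ioo (0:ℝ) s, (g t)^2 := integral_nonneg fun z => sq_nonneg _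
    rw [hu x hx, intervalIntegral.integral_undef hxA, add_zero, sub_self, hEeq]
    simpa using hnn0

theorem stmt_3 (μ : Measure ℝ) [IsProbabilityMeasure μ]
    (hsupp : μ (Set.Icc (0:ℝ) 1)ᶜ = 0)
    (c0 : ℝ) (hc0 : 0 < c0)
    (hE : ∀ v : ℝ → ℝ, MemH1 v → v 0 = 0 → v 1 = 0 →
      (∫ x, (v x) ^ 2 ∂μ) ≤ c0 * dirEnergy v) :
    ∃ c1 : ℝ, 0 < c1 ∧ ∀ u : ℝ → ℝ, MemH1 u →
      (∫ x, (u x) ^ 2 ∂μ) ≤ c1 * (dirEnergy u + (∫ x, |u x| ∂μ) ^ 2) := by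
  refine ⟨8, by norm_num, ?_⟩
  intro u hu
  obtain ⟨g, hg2, hug⟩ := hu
  have hC := claimC hg2 hug
  have hE0 : 0 ≤ dirEnergy u :=
    intervalIntegral.integral_nonneg zero_le_one (fun t _ => sq_nonneg _)
  set E := dirEnergy u with hEdef
  have hsE : 0 ≤ Real.sqrt E := Real.sqrt_nonneg E
  have hCs : ∀ x ∈ Set.Icc (0:ℝ) 1, |u x - u 0| ≤ Real.sqrt E := by
    intro x hx
    rw [← Real.sqrt_sq_eq_abs]
    exact Real.sqrt_le_sqrt (hC x hx)
  have hμIcc : ∀ᵐ x ∂μ, x ∈ Set.Icc (0:ℝ) 1 := by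
    exact ae_iff.mpr hsupp
  set N := ∫ x, |u x| ∂μ with hN
  by_cases hint : Integrable (fun x => u x ^ 2) μ
  · have habsm : AEStronglyMeasurable (fun x => |u x|) μ := by
      have h := Real.continuous_sqrt.comp_aestronglyMeasurable hint.aestronglyMeasurable
      simpa [Real.sqrt_sq_eq_abs] using h
    have habs : Integrable (fun x => |u x|) μ := by
      refine Integrable.mono' ((hint.add (integrable_const 1)).div_const 2) habsm ?_
      filter_upwards with x
      rw [Real.norm_eq_abs, abs_abs]
      simp only [Pi.add_apply]
      nlinarith [sq_nonneg (|u x| - 1), sq_abs (u x)]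
    have h1 : |u 0| - Real.sqrt E ≤ N := by
      have hmono : ∫ _x, (|u 0| - Real.sqrt E) ∂μ ≤ ∫ x, |u x| ∂μ := by
        apply integral_mono_ae (integrable_const _) habs
        filter_upwards [hμIcc] with x hx
        have h := abs_sub_abs_le_abs_sub (u 0) (u x)
        rw [abs_sub_comm] at h
        linarith [hCs x hx]
      simpa [integral_const, measure_univ] using hmono
    have h2 : ∫ x, u x ^ 2 ∂μ ≤ (N + 2*Real.sqrt E)^2 := by
      have hb : ∀ᵐ x ∂μ, u x ^ 2 ≤ (N + 2*Real.sqrt E)^2 := by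
        filter_upwards [hμIcc] with x hx
        have h := abs_sub_abs_le_abs_sub (u x) (u 0)
        have hx2 : |u x| ≤ N + 2*Real.sqrt E := by linarith [hCs x hx, h1]
        calc u x ^ 2 = |u x|^2 := (sq_abs _).symm
          _ ≤ (N + 2*Real.sqrt E)^2 := by nlinarith [abs_nonneg (u x)]
      have hmono := integral_mono_ae hint (integrable_const _) hb
      simpa [integral_const, measure_univ] using hmono
    calc ∫ x, u x ^ 2 ∂μ ≤ (N + 2*Real.sqrt E)^2 := h2
      _ ≤ 8 * (E + N^2) := by
          nlinarith [Real.sq_sqrt hE0, hsE, sq_nonneg (N - 2*Real.sqrt E), sq_nonneg N]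
  · rw [integral_undef hint]
    nlinarith [hE0, sq_nonneg N]
end

section
/- Let λ ≥ 1 and t, s ≥ 0. Then ∫₀^s (sin(√λ·(t - u)) - sin(√λ·(s - u)))² du ≤ (2 + 2s·√λ)·sin²(√λ·(t - s)/2) ≤ (1/2)(1 + s√λ)·λ·(t - s)². -/
theorem stmt_12 (lam t s : ℝ) (hlam : 1 ≤ lam) (ht : 0 ≤ t) (hs : 0 ≤ s) :
    (∫ u in (0:ℝ)..s,
        (Real.sin (Real.sqrt lam * (t - u)) - Real.sin (Real.sqrt lam * (s - u))) ^ 2)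
      ≤ (2 + 2 * s * Real.sqrt lam) * Real.sin (Real.sqrt lam * (t - s) / 2) ^ 2 ∧
    (2 + 2 * s * Real.sqrt lam) * Real.sin (Real.sqrt lam * (t - s) / 2) ^ 2
      ≤ (1 / 2) * (1 + s * Real.sqrt lam) * lam * (t - s) ^ 2 := by
  set r := Real.sqrt lam with hr
  have hr1 : 1 ≤ r := by
    rw [hr, show (1:ℝ) = Real.sqrt 1 by simp]
    exact Real.sqrt_le_sqrt hlam
  have hr0 : (0:ℝ) < r := lt_of_lt_of_le one_pos hr1
  have hrne : r ≠ 0 := ne_of_gt hr0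
  set S := Real.sin (r * (t - s) / 2) with hS
  constructor
  · have hderiv : ∀ u ∈ Set.uIcc (0:ℝ) s,
        HasDerivAt (fun u : ℝ => 4 * S ^ 2 * (u / 2 - Real.sin (r * (t + s) - 2 * r * u) / (4 * r)))
          ((Real.sin (r * (t - u)) - Real.sin (r * (s - u))) ^ 2) u := by
      intro u _
      have h1 : HasDerivAt (fun u : ℝ => r * (t + s) - 2 * r * u) (-(2 * r)) u := by
        simpa using ((hasDerivAt_id u).const_mul (2 * r)).const_sub (r * (t + s))
      have h3 : HasDerivAt (fun u : ℝ => u / 2 - Real.sin (r * (t + s) - 2 * r * u) / (4 * r))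
          (1 / 2 - Real.cos (r * (t + s) - 2 * r * u) * (-(2 * r)) / (4 * r)) u :=
        ((hasDerivAt_id u).div_const 2).sub (h1.sin.div_const (4 * r))
      have h4 := h3.const_mul (4 * S ^ 2)
      refine h4.congr_deriv ?_
      symm
      rw [Real.sin_sub_sin]
      have he1 : (r * (t - u) - r * (s - u)) / 2 = r * (t - s) / 2 := by ring
      have he2 : (r * (t - u) + r * (s - u)) / 2 = (r * (t + s) - 2 * r * u) / 2 := by ring
      rw [he1, he2, ← hS]
      have hD : Real.cos (r * (t + s) - 2 * r * u)
          = 2 * Real.cos ((r * (t + s) - 2 * r * u) / 2) ^ 2 - 1 := by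
        have h := Real.cos_two_mul ((r * (t + s) - 2 * r * u) / 2)
        rw [show 2 * ((r * (t + s) - 2 * r * u) / 2) = r * (t + s) - 2 * r * u from by ring] at h
        exact h
      rw [hD]
      field_simp
      ring
    have hcont : Continuous fun u : ℝ =>
        (Real.sin (r * (t - u)) - Real.sin (r * (s - u))) ^ 2 := by fun_prop
    have hint := intervalIntegral.integral_eq_sub_of_hasDerivAt hderiv
      (hcont.intervalIntegrable 0 s)
    rw [hint]
    have hA : |Real.sin (r * (t + s) - 2 * r * s)| ≤ 1 := Real.abs_sin_le_one _
    have hB : |Real.sin (r * (t + s) - 2 * r * 0)| ≤ 1 := Real.abs_sin_le_one _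
    rw [abs_le] at hA hB
    have hS2 : (0:ℝ) ≤ S ^ 2 := sq_nonneg _
    have expand : 4 * S ^ 2 * (s / 2 - Real.sin (r * (t + s) - 2 * r * s) / (4 * r))
        - 4 * S ^ 2 * (0 / 2 - Real.sin (r * (t + s) - 2 * r * 0) / (4 * r))
        = 2 * s * S ^ 2 + S ^ 2 *
          ((Real.sin (r * (t + s) - 2 * r * 0) - Real.sin (r * (t + s) - 2 * r * s)) / r) := by
      field_simp
      ring
    rw [expand]
    have hdivle : (Real.sin (r * (t + s) - 2 * r * 0) - Real.sin (r * (t + s) - 2 * r * s)) / r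
        ≤ 2 := by
      rw [div_le_iff₀ hr0]
      nlinarith
    nlinarith [mul_le_mul_of_nonneg_left hdivle hS2,
      mul_nonneg (mul_nonneg hs (sub_nonneg.mpr hr1)) hS2]
  · have hsin : S ^ 2 ≤ (r * (t - s) / 2) ^ 2 := Real.sin_sq_le_sq
    have hlam' : r ^ 2 = lam := Real.sq_sqrt (le_trans zero_le_one hlam)
    have h2 : (0:ℝ) ≤ 2 + 2 * s * r := by nlinarith
    calc (2 + 2 * s * r) * S ^ 2 ≤ (2 + 2 * s * r) * (r * (t - s) / 2) ^ 2 :=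
          mul_le_mul_of_nonneg_left hsin h2
      _ = 1 / 2 * (1 + s * r) * lam * (t - s) ^ 2 := by rw [← hlam']; ring
end
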